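/- Let G be a connected nontrivial simple graph with m vertices and let n ≥ 3. If min{3n·λ(G), 2·(m + 2·e(G))} ≥ 6·δ(G) + 2, then the strong product G ⊠ C_n is maximally restricted edge-connected, i.e., λ′(G ⊠ C_n) = ξ(G ⊠ C_n). -/

import Mathlib

/-!
Write `P = G ⊠ Cₙ` and `δ = δ(G)`. A vertex `(x, i)` of `P` has degree `3 d(x) + 2`, so
`ξ(P) = 6δ + 2`, attained at the edge `(x, 0)(x, 1)` with `d(x) = δ`; the other edges at its two
ends form a restricted edge-cut, so `λ'(P) ≤ 6δ + 2`.

Conversely, a restricted edge-cut `S` contains every edge leaving some `X` such that `X` and its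
complement have at least two vertices each (take a component of `P - S`). Count the darts leaving
`X` fibre by fibre. If one fibre lies inside `X` and another misses `X`, then for each
`1 ≤ t ≤ n` the vertices of `G` whose fibre meets `X` in at least `t` points form a proper
nonempty set, with at least `λ(G)` boundary edges, while an edge `zz'` of `G` carries at least
`3 (|X_z| - |X_z'|)` darts: in total at least `3nλ(G) ≥ 6δ + 2`. Otherwise, up to
complementation, `X` meets every fibre. Then every fibre meeting `Xᶜ` contains two darts of the
cycle, shares at least four darts with each adjacent fibre of the same kind, and receives three
darts per point from each adjacent fibre contained in `X`; this again adds up to at least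
`6δ + 2`.
-/

/-- The strong product of two simple graphs. -/
def strongProd {α β : Type*} (G : SimpleGraph α) (H : SimpleGraph β) :
    SimpleGraph (α × β) where
  Adj x y := (x.1 = y.1 ∧ H.Adj x.2 y.2) ∨ (x.2 = y.2 ∧ G.Adj x.1 y.1) ∨
    (G.Adj x.1 y.1 ∧ H.Adj x.2 y.2)
  symm := by
    constructor
    rintro ⟨a₁, a₂⟩ ⟨b₁, b₂⟩ (⟨h1, h2⟩ | ⟨h1, h2⟩ | ⟨h1, h2⟩)
    · exact Or.inl ⟨h1.symm, h2.symm⟩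
    · exact Or.inr (Or.inl ⟨h1.symm, h2.symm⟩)
    · exact Or.inr (Or.inr ⟨h1.symm, h2.symm⟩)
  loopless := by
    constructor
    rintro ⟨a₁, a₂⟩ (⟨_, h⟩ | ⟨_, h⟩ | ⟨h, _⟩)
    · exact H.irrefl h
    · exact G.irrefl h
    · exact G.irrefl h

/-- The degree of a vertex. -/
noncomputable def deg {α : Type*} (G : SimpleGraph α) (v : α) : ℕ := (G.neighborSet v).ncard

/-- The minimum degree `δ(G)`. -/
noncomputable def minDeg {α : Type*} (G : SimpleGraph α) : ℕ := sInf {d | ∃ v, d = deg G v}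

/-- The number of edges `e(G)`. -/
noncomputable def numEdges {α : Type*} (G : SimpleGraph α) : ℕ := G.edgeSet.ncard

/-- The minimum edge-degree `ξ(G) = min {d(u) + d(v) - 2 : uv ∈ E(G)}`. -/
noncomputable def minEdgeDeg {α : Type*} (G : SimpleGraph α) : ℕ :=
  sInf {d | ∃ u v, G.Adj u v ∧ d = deg G u + deg G v - 2}

/-- The edge-connectivity `λ(G)`. -/
noncomputable def edgeConn {α : Type*} (G : SimpleGraph α) : ℕ :=
  sInf {k | ∃ S : Set (Sym2 α), S ⊆ G.edgeSet ∧ S.ncard = k ∧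
    ¬ (G.deleteEdges S).Connected}

/-- `S` is a restricted edge-cut of `G`: deleting `S` disconnects `G` and every
component of `G - S` has at least two vertices. -/
def IsRestrictedEdgeCut {α : Type*} (G : SimpleGraph α) (S : Set (Sym2 α)) : Prop :=
  S ⊆ G.edgeSet ∧ ¬ (G.deleteEdges S).Connected ∧
    ∀ v : α, 2 ≤ ((G.deleteEdges S).connectedComponentMk v).supp.ncard

/-- The restricted edge-connectivity `λ'(G)`. -/
noncomputable def restEdgeConn {α : Type*} (G : SimpleGraph α) : ℕ :=
  sInf {k | ∃ S : Set (Sym2 α), IsRestrictedEdgeCut G S ∧ S.ncard = k}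

/-- `G` is super restricted edge-connected: every minimum restricted edge-cut
isolates an edge, i.e. some component of `G - S` has exactly two vertices. -/
def SuperRestrictedEdgeConnected {α : Type*} (G : SimpleGraph α) : Prop :=
  ∀ S : Set (Sym2 α), IsRestrictedEdgeCut G S → S.ncard = restEdgeConn G →
    ∃ v : α, ((G.deleteEdges S).connectedComponentMk v).supp.ncard = 2

/-- The set `[X, Y]_G` of edges of `G` with one end in `X` and the other in `Y`. -/
def edgesBetween {α : Type*} (G : SimpleGraph α) (X Y : Set α) : Set (Sym2 α) :=
  {e | e ∈ G.edgeSet ∧ ∃ u ∈ X, ∃ v ∈ Y, e = s(u, v)}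


open Finset SimpleGraph
open scoped Classical Fin.CommRing

section Boundary

variable {α : Type*}

lemma mem_of_reachable_of_adj_closed {K : SimpleGraph α} {X : Set α}
    (hX : ∀ a b, K.Adj a b → a ∈ X → b ∈ X) {a b : α} (hab : K.Reachable a b) (ha : a ∈ X) :
    b ∈ X := by
  obtain ⟨p⟩ := hab
  induction p with
  | nil => exact ha
  | cons h _ ih => exact ih (hX _ _ h ha)

variable [Fintype α]

noncomputable def boundaryDarts (H : SimpleGraph α) (X : Set α) : Finset (α × α) :=
  {p | H.Adj p.1 p.2 ∧ p.1 ∈ X ∧ p.2 ∉ X}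

variable {H : SimpleGraph α}

lemma mem_boundaryDarts {X : Set α} {p : α × α} :
    p ∈ boundaryDarts H X ↔ H.Adj p.1 p.2 ∧ p.1 ∈ X ∧ p.2 ∉ X := by
  simp [boundaryDarts]

lemma card_boundaryDarts_compl (X : Set α) :
    #(boundaryDarts H Xᶜ) = #(boundaryDarts H X) :=
  card_nbij' Prod.swap Prod.swap
    (fun p hp => by simp_all [mem_boundaryDarts, H.adj_comm])
    (fun p hp => by simp_all [mem_boundaryDarts, H.adj_comm])
    (fun p _ => p.swap_swap) (fun p _ => p.swap_swap)

lemma card_boundaryDarts_le_ncard {X : Set α} {S : Set (Sym2 α)}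
    (hS : ∀ a b, H.Adj a b → a ∈ X → b ∉ X → s(a, b) ∈ S) :
    #(boundaryDarts H X) ≤ S.ncard := by
  rw [Set.ncard_eq_toFinset_card']
  refine card_le_card_of_injOn (fun p => s(p.1, p.2)) (fun p hp => ?_) (fun p hp q hq hpq => ?_)
  · rw [mem_coe, mem_boundaryDarts] at hp
    rw [mem_coe, Set.mem_toFinset]
    exact hS _ _ hp.1 hp.2.1 hp.2.2
  · simp only [mem_coe, mem_boundaryDarts] at hp hq
    rcases Sym2.eq_iff.1 hpq with ⟨h₁, h₂⟩ | ⟨h₁, -⟩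
    · exact Prod.ext h₁ h₂
    · exact absurd (h₁ ▸ hp.2.1) hq.2.2

lemma edgeConn_le_card_boundaryDarts {A : Set α} {a b : α} (ha : a ∈ A) (hb : b ∉ A) :
    edgeConn H ≤ #(boundaryDarts H A) := by
  set S : Set (Sym2 α) := ↑((boundaryDarts H A).image fun p => s(p.1, p.2))
  have hSE : S ⊆ H.edgeSet := fun e he => by
    obtain ⟨p, hp, rfl⟩ := mem_image.1 he
    exact (mem_boundaryDarts.1 hp).1
  have hclosed : ∀ x y, (H.deleteEdges S).Adj x y → x ∈ A → y ∈ A := fun x y hxy hx =>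
    by_contra fun hy => (deleteEdges_adj.1 hxy).2
      (mem_image_of_mem _ (mem_boundaryDarts.2 ⟨(deleteEdges_adj.1 hxy).1, hx, hy⟩))
  calc edgeConn H ≤ S.ncard := Nat.sInf_le ⟨S, hSE, rfl, fun hc =>
        hb (mem_of_reachable_of_adj_closed hclosed (hc.preconnected a b) ha)⟩
    _ ≤ #(boundaryDarts H A) := by
        rw [Set.ncard_coe_finset]
        exact card_image_le

lemma IsRestrictedEdgeCut.exists_card_boundaryDarts_le [Nonempty α] {S : Set (Sym2 α)}
    (hS : IsRestrictedEdgeCut H S) :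
    ∃ X : Set α, 2 ≤ X.ncard ∧ 2 ≤ Xᶜ.ncard ∧ #(boundaryDarts H X) ≤ S.ncard := by
  obtain ⟨-, hdis, hcomp⟩ := hS
  set K := H.deleteEdges S
  obtain ⟨a, b, hab⟩ : ∃ a b, ¬ K.Reachable a b := by
    by_contra! h
    exact hdis ((connected_iff K).2 ⟨h, inferInstance⟩)
  set X := (K.connectedComponentMk a).supp
  have hbX : (K.connectedComponentMk b).supp ⊆ Xᶜ := fun w hw hwa => by
    rw [ConnectedComponent.mem_supp_iff] at hw hwa
    exact hab (ConnectedComponent.exact (hwa.symm.trans hw))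
  have hXS : ∀ x y, H.Adj x y → x ∈ X → y ∉ X → s(x, y) ∈ S := fun x y hxy hx hy =>
    by_contra fun hxyS => hy <| by
      rw [ConnectedComponent.mem_supp_iff] at hx ⊢
      rw [← hx]
      exact ConnectedComponent.connectedComponentMk_eq_of_adj
        (deleteEdges_adj.2 ⟨hxy, hxyS⟩).symm
  exact ⟨X, hcomp a, (hcomp b).trans (Set.ncard_le_ncard hbX (Set.toFinite _)),
    card_boundaryDarts_le_ncard hXS⟩

lemma sum_card_boundaryDarts_superlevel (f : α → ℕ) {N : ℕ} (hf : ∀ a, f a ≤ N) :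
    ∑ t ∈ Icc 1 N, #(boundaryDarts H {a | t ≤ f a}) =
      ∑ q ∈ {q : α × α | H.Adj q.1 q.2}, (f q.1 - f q.2) := by
  simp only [boundaryDarts, card_filter, sum_filter]
  rw [sum_comm]
  refine sum_congr rfl fun q _ => ?_
  split_ifs with hq
  · have hIoc : Ioc (f q.2) (f q.1) ⊆ Icc 1 N := fun t ht => by
      simp only [mem_Ioc, mem_Icc] at ht ⊢
      exact ⟨by omega, ht.2.trans (hf q.1)⟩
    calc _ = ∑ t ∈ Icc 1 N, if t ∈ Ioc (f q.2) (f q.1) then 1 else 0 :=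
          sum_congr rfl fun t _ => by simp [hq, and_comm]
      _ = f q.1 - f q.2 := by
          rw [sum_ite_mem, inter_eq_right.2 hIoc, sum_const, smul_eq_mul, mul_one, Nat.card_Ioc]
  · simp [hq]

end Boundary

section Degree

variable {α : Type*} {H : SimpleGraph α}

lemma minDeg_le_deg (v : α) : minDeg H ≤ deg H v := Nat.sInf_le ⟨v, rfl⟩

lemma exists_deg_eq_minDeg [Nonempty α] : ∃ v, deg H v = minDeg H := by
  obtain ⟨v, hv⟩ :=
    Nat.sInf_mem (⟨_, Classical.arbitrary α, rfl⟩ : {d | ∃ v, d = deg H v}.Nonempty)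
  exact ⟨v, hv.symm⟩

lemma deg_eq_card_filter_adj [Fintype α] (v : α) : deg H v = #{w | H.Adj v w} := by
  rw [deg, ← Set.ncard_coe_finset]
  congr 1
  ext w
  simp

lemma ncard_incidenceSet [Finite α] (v : α) : (H.incidenceSet v).ncard = deg H v := by
  rw [deg, ← Nat.card_coe_set_eq, ← Nat.card_coe_set_eq]
  exact Nat.card_congr (H.incidenceSetEquivNeighborSet v)

lemma two_le_ncard_supp_of_adj [Finite α] {v w : α} (h : H.Adj v w) :
    2 ≤ (H.connectedComponentMk v).supp.ncard := by
  rw [← Set.ncard_pair h.ne]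
  refine Set.ncard_le_ncard (fun x hx => ?_) (Set.toFinite _)
  rw [ConnectedComponent.mem_supp_iff]
  rcases hx with rfl | rfl
  · rfl
  · exact ConnectedComponent.connectedComponentMk_eq_of_adj h.symm

lemma exists_isRestrictedEdgeCut_of_adj [Finite α] {u v : α} (huv : H.Adj u v)
    (hw : ∃ w, w ≠ u ∧ w ≠ v)
    (hnb : ∀ w, w ≠ u → w ≠ v → ∃ w', w' ≠ u ∧ w' ≠ v ∧ H.Adj w w') :
    ∃ S, IsRestrictedEdgeCut H S ∧ S.ncard = deg H u + deg H v - 2 := by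
  set S := (H.incidenceSet u ∪ H.incidenceSet v) \ {s(u, v)}
  set K := H.deleteEdges S
  have hclosed : ∀ x y, K.Adj x y → x ∈ ({u, v} : Set α) → y ∈ ({u, v} : Set α) := by
    intro x y hxy hx
    obtain ⟨hHxy, hxyS⟩ := deleteEdges_adj.1 hxy
    by_contra hy
    refine hxyS ⟨?_, fun h => hy ?_⟩
    · rcases hx with rfl | rfl
      exacts [.inl ⟨hHxy, Sym2.mem_mk_left _ _⟩, .inr ⟨hHxy, Sym2.mem_mk_left _ _⟩]
    · rcases Sym2.eq_iff.1 h with ⟨-, rfl⟩ | ⟨-, rfl⟩ <;> simp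
  have hKadj : ∀ w, ∃ w', K.Adj w w' := by
    intro w
    by_cases hwu : w = u
    · exact ⟨v, deleteEdges_adj.2 ⟨hwu ▸ huv, fun h => h.2 (by rw [hwu]; rfl)⟩⟩
    by_cases hwv : w = v
    · exact ⟨u, deleteEdges_adj.2
        ⟨hwv ▸ huv.symm, fun h => h.2 (by rw [hwv, Sym2.eq_swap]; rfl)⟩⟩
    obtain ⟨w', hw'u, hw'v, hww'⟩ := hnb w hwu hwv
    refine ⟨w', deleteEdges_adj.2 ⟨hww', fun h => ?_⟩⟩
    rcases h.1 with ⟨-, h⟩ | ⟨-, h⟩ <;> rcases Sym2.mem_iff.1 h with h | h <;> simp_all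
  have hcard : S.ncard = deg H u + deg H v - 2 := by
    have h := Set.ncard_union_add_ncard_inter (H.incidenceSet u) (H.incidenceSet v)
    rw [H.incidenceSet_inter_incidenceSet_of_adj huv, Set.ncard_singleton, ncard_incidenceSet,
      ncard_incidenceSet] at h
    rw [Set.ncard_sdiff_singleton_of_mem (.inl ⟨huv, Sym2.mem_mk_left _ _⟩)]
    omega
  obtain ⟨w, hwu, hwv⟩ := hw
  refine ⟨S, ⟨fun e he => ?_, fun hc => ?_, fun x => ?_⟩, hcard⟩
  · rcases he.1 with he | he <;> exact he.1
  · exact (by simp [hwu, hwv] : w ∉ ({u, v} : Set α))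
      (mem_of_reachable_of_adj_closed hclosed (hc.preconnected u w) (.inl rfl))
  · obtain ⟨x', hx'⟩ := hKadj x
    exact two_le_ncard_supp_of_adj hx'

end Degree

lemma mul_sum_card_filter_le_sum {ι : Type*} {s : Finset ι} {r : ι → ι → Prop} [DecidableRel r]
    (hr : ∀ a b, r a b → r b a) {f : ι → ι → ℕ} {c : ℕ}
    (hf : ∀ a ∈ s, ∀ b ∈ s, r a b → 2 * c ≤ f a b + f b a) :
    c * ∑ a ∈ s, #{b ∈ s | r a b} ≤ ∑ a ∈ s, ∑ b ∈ s with r a b, f b a := by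
  have hswap : ∑ a ∈ s, ∑ b ∈ s with r a b, f b a = ∑ a ∈ s, ∑ b ∈ s with r a b, f a b := by
    simp only [sum_filter]
    rw [sum_comm]
    exact sum_congr rfl fun a _ => sum_congr rfl fun b _ => by
      simp only [show r b a ↔ r a b from ⟨hr b a, hr a b⟩]
  have h2 : 2 * (c * ∑ a ∈ s, #{b ∈ s | r a b}) ≤
      ∑ a ∈ s, ∑ b ∈ s with r a b, (f a b + f b a) := by
    simp only [mul_sum, card_eq_sum_ones]
    refine sum_le_sum fun a ha => sum_le_sum fun b hb => ?_
    rw [mem_filter] at hb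
    simpa using hf a ha b hb.1 hb.2
  simp only [sum_add_distrib, ← hswap] at h2
  omega

section ClosedLinks

/- Over an edge `zz'` of `G`, the edges of `G ⊠ H` from the fibre `U` above `z` to the fibre `W`
above `z'` are the pairs `(i, j) ∈ U × W` with `j` in the closed neighbourhood of `i`. -/
def closedLinks {β : Type*} [DecidableEq β] (H : SimpleGraph β) [DecidableRel H.Adj]
    (U W : Finset β) : Finset (β × β) :=
  {p ∈ U ×ˢ W | p.1 = p.2 ∨ H.Adj p.1 p.2}

variable {β : Type*} {H : SimpleGraph β} [DecidableEq β] [DecidableRel H.Adj]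

lemma card_closedLinks (U W : Finset β) :
    #(closedLinks H U W) = ∑ i ∈ U, #{j ∈ W | i = j ∨ H.Adj i j} := by
  simp only [closedLinks, card_filter, sum_product]

variable [Fintype β]

lemma card_closedNbhd {d : ℕ} (hH : ∀ i, deg H i = d) (i : β) :
    #{j | i = j ∨ H.Adj i j} = d + 1 := by
  have : (({j | i = j ∨ H.Adj i j} : Finset β) : Set β) = insert i (H.neighborSet i) := by
    ext j
    simp [eq_comm]
  rw [← Set.ncard_coe_finset, this, Set.ncard_insert_of_notMem (H.notMem_neighborSet_self)
    (Set.toFinite _), ← deg, hH]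

lemma card_closedLinks_univ_right {d : ℕ} (hH : ∀ i, deg H i = d) (U : Finset β) :
    #(closedLinks H U univ) = (d + 1) * #U := by
  rw [card_closedLinks, sum_congr rfl fun i _ => card_closedNbhd hH i, sum_const, smul_eq_mul,
    mul_comm]

lemma card_closedLinks_univ_left {d : ℕ} (hH : ∀ i, deg H i = d) (W : Finset β) :
    #(closedLinks H univ W) = (d + 1) * #W := by
  rw [← card_closedLinks_univ_right hH W]
  refine card_nbij' Prod.swap Prod.swap (fun p hp => ?_) (fun p hp => ?_)
    (fun p _ => p.swap_swap) (fun p _ => p.swap_swap) <;>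
  simp_all [closedLinks, eq_comm, H.adj_comm]

lemma le_card_closedLinks_compl {d : ℕ} (hH : ∀ i, deg H i = d) (U W : Finset β) :
    (d + 1) * #U ≤ #(closedLinks H U Wᶜ) + (d + 1) * #W := by
  rw [← card_closedLinks_univ_right hH, ← card_closedLinks_univ_left hH]
  refine (card_le_card fun p hp => ?_).trans (card_union_le _ _)
  by_cases h : p.2 ∈ W <;> simp_all [closedLinks]

end ClosedLinks

namespace Fin

lemma eq_univ_of_add_one_mem {m : ℕ} [NeZero m] {W : Finset (Fin m)} (hW : W.Nonempty)
    (h : ∀ w ∈ W, w + 1 ∈ W) : W = univ := by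
  obtain ⟨p, hp⟩ := hW
  have hk : ∀ k : ℕ, p + k ∈ W := by
    intro k
    induction k with
    | zero => simpa using hp
    | succ k ih => simpa [add_assoc] using h _ ih
  refine eq_univ_of_forall fun b => ?_
  simpa using hk (b - p).val

lemma exists_mem_add_one_notMem {m : ℕ} [NeZero m] {W : Finset (Fin m)} (hW : W.Nonempty)
    (hW' : W ≠ univ) : ∃ w ∈ W, w + 1 ∉ W := by
  by_contra! h
  exact hW' (eq_univ_of_add_one_mem hW h)

lemma exists_mem_sub_one_notMem {m : ℕ} [NeZero m] {W : Finset (Fin m)} (hW : W.Nonempty)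
    (hW' : W ≠ univ) : ∃ w ∈ W, w - 1 ∉ W := by
  by_contra! h
  have himg : W.image (· - 1) = W := eq_of_subset_of_card_le (image_subset_iff.2 h)
    (card_image_of_injective _ sub_left_injective).ge
  refine hW' (eq_univ_of_add_one_mem hW fun w hw => ?_)
  rw [← himg] at hw
  obtain ⟨w', hw', rfl⟩ := mem_image.1 hw
  simpa using hw'

lemma sub_one_ne_add_one {n : ℕ} (i : Fin (n + 3)) : i - 1 ≠ i + 1 := by
  intro h
  have h2 : (2 : Fin (n + 3)) = 0 := by linear_combination -h
  exact absurd h2 (ne_of_beq_false rfl)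

end Fin

section Cycle

variable {n : ℕ}

lemma cycleGraph_adj_iff {i j : Fin (n + 3)} :
    (cycleGraph (n + 3)).Adj i j ↔ j = i - 1 ∨ j = i + 1 := by
  rw [← mem_neighborSet, cycleGraph_neighborSet]
  rfl

lemma deg_cycleGraph (i : Fin (n + 3)) : deg (cycleGraph (n + 3)) i = 2 := by
  rw [deg, cycleGraph_neighborSet, Set.ncard_pair (Fin.sub_one_ne_add_one i)]

lemma two_le_card_boundaryDarts_cycleGraph {U : Finset (Fin (n + 3))} (hU : U.Nonempty)
    (hU' : U ≠ univ) : 2 ≤ #(boundaryDarts (cycleGraph (n + 3)) U) := by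
  obtain ⟨a, ha, ha'⟩ := Fin.exists_mem_add_one_notMem hU hU'
  obtain ⟨b, hb, hb'⟩ := Fin.exists_mem_sub_one_notMem hU hU'
  have hne : (a, a + 1) ≠ (b, b - 1) := by
    intro h
    obtain ⟨rfl, h⟩ := Prod.mk.inj h
    exact Fin.sub_one_ne_add_one a h.symm
  calc 2 = #{(a, a + 1), (b, b - 1)} := (card_pair hne).symm
    _ ≤ _ := card_le_card fun p hp => by
      rcases mem_insert.1 hp with rfl | hp
      · simp [mem_boundaryDarts, cycleGraph_adj_iff, ha, ha']
      · rw [mem_singleton.1 hp]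
        simp [mem_boundaryDarts, cycleGraph_adj_iff, hb, hb']

lemma card_add_two_le_of_closedNbhd_subset {W T : Finset (Fin (n + 3))} (hW : W.Nonempty)
    (hT : T ≠ univ) (hWT : ∀ w ∈ W, w ∈ T ∧ w - 1 ∈ T ∧ w + 1 ∈ T) : #W + 2 ≤ #T := by
  have hW' : W ≠ univ := fun h => hT (eq_univ_of_forall fun i => (hWT i (h ▸ mem_univ i)).1)
  obtain ⟨a, ha, ha'⟩ := Fin.exists_mem_add_one_notMem hW hW'
  have hsub : insert (a + 1) W ⊆ T := insert_subset (hWT a ha).2.2 fun w hw => (hWT w hw).1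
  obtain ⟨b, hb, hb'⟩ := Fin.exists_mem_sub_one_notMem (insert_nonempty _ _)
    fun h => hT (univ_subset_iff.1 (h ▸ hsub))
  have hbW : b ∈ W := by
    rcases mem_insert.1 hb with rfl | hb
    · simp [ha] at hb'
    · exact hb
  calc #W + 2 = #(insert (b - 1) (insert (a + 1) W)) := by
        rw [card_insert_of_notMem hb', card_insert_of_notMem ha']
    _ ≤ #T := card_le_card (insert_subset (hWT b hbW).2.1 hsub)

/- If every vertex has a closed neighbour in `W`, each `i ∈ U` has at least `max 1 (3 - #Wᶜ)`
links into `W`. Otherwise the closed neighbourhood `T` of `W` is proper, so `#T ≥ #W + 2`, and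
`U` meets `T` in at least `#U + #T - (n + 3)` points. -/
lemma card_add_card_add_two_le_card_closedLinks {U W : Finset (Fin (n + 3))} (hU : U.Nonempty)
    (hW : W.Nonempty) : #U + #W + 2 ≤ #(closedLinks (cycleGraph (n + 3)) U W) + (n + 3) := by
  set C := cycleGraph (n + 3)
  set c : Fin (n + 3) → ℕ := fun i => #{j ∈ W | i = j ∨ C.Adj i j}
  have hWc : #W + #Wᶜ = n + 3 := by rw [card_add_card_compl, Fintype.card_fin]
  rw [show #(closedLinks C U W) = ∑ i ∈ U, c i from card_closedLinks U W]
  by_cases hT : ∀ i, 0 < c i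
  · have h3 : ∀ i, 3 ≤ c i + #Wᶜ := fun i => calc
      3 = #{j | i = j ∨ C.Adj i j} := by rw [card_closedNbhd deg_cycleGraph i]
      _ ≤ c i + #{j ∈ Wᶜ | i = j ∨ C.Adj i j} := by
        rw [← card_union_of_disjoint (disjoint_filter_filter disjoint_compl_right),
          ← filter_union, union_compl]
      _ ≤ c i + #Wᶜ := by grw [card_filter_le]
    have h1 : #U ≤ ∑ i ∈ U, c i := by simpa using card_nsmul_le_sum U c 1 fun i _ => hT i
    have h3U : 3 * #U ≤ ∑ i ∈ U, c i + #U * #Wᶜ := by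
      simpa [sum_add_distrib, mul_comm] using sum_le_sum fun i (_ : i ∈ U) => h3 i
    have := hU.card_pos
    nlinarith
  obtain ⟨i₀, hi₀⟩ := not_forall.1 hT
  set T : Finset (Fin (n + 3)) := {i | 0 < c i}
  have hTW : #W + 2 ≤ #T := by
    refine card_add_two_le_of_closedNbhd_subset hW (fun h => ?_) fun w hw => ?_
    · have hi : i₀ ∈ T := h ▸ mem_univ i₀
      simp [T, hi₀] at hi
    · simp only [T, c, mem_filter, mem_univ, true_and, card_pos]
      exact ⟨⟨w, by simp [hw]⟩, ⟨w, by simp [hw, cycleGraph_adj_iff, C]⟩,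
        ⟨w, by simp [hw, cycleGraph_adj_iff, C]⟩⟩
  have hUT : #(U ∩ T) ≤ ∑ i ∈ U, c i := calc
    #(U ∩ T) = ∑ i ∈ U, if 0 < c i then 1 else 0 := by
      rw [sum_boole, Nat.cast_id, ← filter_mem_eq_inter]
      simp [T]
    _ ≤ ∑ i ∈ U, c i := sum_le_sum fun i _ => by split_ifs <;> omega
  have := card_inter_add_card_union U T
  have := card_le_univ (U ∪ T)
  rw [Fintype.card_fin] at this
  omega

end Cycle

section StrongProduct

variable {V β : Type*} {G : SimpleGraph V} {H : SimpleGraph β}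

lemma strongProd_adj_iff {x y : V} {i j : β} :
    (strongProd G H).Adj (x, i) (y, j) ↔
      (x = y ∧ H.Adj i j) ∨ (G.Adj x y ∧ (i = j ∨ H.Adj i j)) := by
  simp only [strongProd]
  tauto

lemma deg_strongProd [Finite V] [Finite β] (x : V) (i : β) :
    deg (strongProd G H) (x, i) = (deg G x + 1) * (deg H i + 1) - 1 := by
  have hN : (strongProd G H).neighborSet (x, i) =
      (insert x (G.neighborSet x) ×ˢ insert i (H.neighborSet i)) \ {(x, i)} := by
    ext ⟨y, j⟩
    simp only [mem_neighborSet, strongProd_adj_iff, Set.mem_sdiff, Set.mem_prod,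
      Set.mem_insert_iff, Set.mem_singleton_iff, Prod.mk.injEq]
    constructor
    · rintro (⟨rfl, h⟩ | ⟨h, rfl | h'⟩)
      · exact ⟨⟨.inl rfl, .inr h⟩, fun h' => H.ne_of_adj h h'.2.symm⟩
      · exact ⟨⟨.inr h, .inl rfl⟩, fun h' => G.ne_of_adj h h'.1.symm⟩
      · exact ⟨⟨.inr h, .inr h'⟩, fun h' => G.ne_of_adj h h'.1.symm⟩
    · rintro ⟨⟨rfl | hy, rfl | hj⟩, hne⟩
      · exact absurd ⟨rfl, rfl⟩ hne
      · exact .inl ⟨rfl, hj⟩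
      · exact .inr ⟨hy, .inl rfl⟩
      · exact .inr ⟨hy, .inr hj⟩
  rw [deg, hN, Set.ncard_sdiff_singleton_of_mem (by simp), Set.ncard_prod,
    Set.ncard_insert_of_notMem (G.notMem_neighborSet_self) (Set.toFinite _),
    Set.ncard_insert_of_notMem (H.notMem_neighborSet_self) (Set.toFinite _), deg, deg]

variable [Fintype β]

noncomputable def fiber (X : Set (V × β)) (z : V) : Finset β := {i | (z, i) ∈ X}

lemma mem_fiber {X : Set (V × β)} {z : V} {i : β} : i ∈ fiber X z ↔ (z, i) ∈ X := by
  simp [fiber]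

lemma fiber_compl [DecidableEq β] (X : Set (V × β)) (z : V) : fiber Xᶜ z = (fiber X z)ᶜ := by
  ext i
  simp [mem_fiber]

lemma ncard_le_card_fiber {X : Set (V × β)} {y : V} (hy : ∀ z, (fiber X z).Nonempty → z = y) :
    X.ncard ≤ #(fiber X y) := calc
  X.ncard ≤ (((fiber X y).image (Prod.mk y) : Finset (V × β)) : Set (V × β)).ncard := by
    refine Set.ncard_le_ncard (fun ⟨z, i⟩ hzi => ?_) (Set.toFinite _)
    obtain rfl := hy z ⟨i, mem_fiber.2 hzi⟩
    simpa [mem_fiber] using hzi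
  _ ≤ #(fiber X y) := by
    rw [Set.ncard_coe_finset]
    exact card_image_le

noncomputable def fiberBoundary (P : SimpleGraph (V × β)) (X : Set (V × β)) (z z' : V) : ℕ :=
  #{p ∈ fiber X z ×ˢ fiber Xᶜ z' | P.Adj (z, p.1) (z', p.2)}

lemma card_boundaryDarts_eq_sum_fiberBoundary [Fintype V] (P : SimpleGraph (V × β))
    (X : Set (V × β)) : #(boundaryDarts P X) = ∑ z, ∑ z', fiberBoundary P X z z' := by
  rw [card_eq_sum_card_fiberwise (f := fun d => (d.1.1, d.2.1)) (t := univ)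
    (fun _ _ => mem_coe.2 (mem_univ _)), Fintype.sum_prod_type]
  refine sum_congr rfl fun z _ => sum_congr rfl fun z' _ => ?_
  refine card_nbij' (fun d => (d.1.2, d.2.2)) (fun p => ((z, p.1), (z', p.2)))
    (fun d hd => ?_) (fun p hp => ?_) (fun d hd => ?_) (fun p _ => rfl)
  · simp only [coe_filter, mem_boundaryDarts, Set.mem_ofPred_eq, Prod.mk.injEq] at hd
    obtain ⟨⟨hadj, h₁, h₂⟩, rfl, rfl⟩ := hd
    simpa [mem_fiber] using ⟨⟨h₁, h₂⟩, hadj⟩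
  · simp only [coe_filter, mem_product, mem_fiber, Set.mem_ofPred_eq] at hp
    simpa [mem_boundaryDarts] using ⟨hp.2, hp.1⟩
  · simp only [coe_filter, Set.mem_ofPred_eq, Prod.mk.injEq] at hd
    obtain ⟨-, rfl, rfl⟩ := hd
    rfl

lemma fiberBoundary_strongProd_self (X : Set (V × β)) (z : V) :
    fiberBoundary (strongProd G H) X z z = #(boundaryDarts H (fiber X z)) := by
  rw [fiberBoundary]
  congr 1
  ext ⟨i, j⟩
  simp [mem_boundaryDarts, mem_fiber, strongProd_adj_iff, and_comm, and_assoc]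

lemma fiberBoundary_strongProd_of_adj [DecidableEq β] [DecidableRel H.Adj] (X : Set (V × β))
    {z z' : V} (h : G.Adj z z') :
    fiberBoundary (strongProd G H) X z z' = #(closedLinks H (fiber X z) (fiber Xᶜ z')) := by
  rw [fiberBoundary]
  congr 1
  ext ⟨i, j⟩
  simp [closedLinks, strongProd_adj_iff, h, G.ne_of_adj h]

end StrongProduct

section StrongProductCycle

variable {V : Type*} {G : SimpleGraph V} {n : ℕ}

lemma deg_strongProd_cycleGraph [Finite V] (x : V) (i : Fin (n + 3)) :
    deg (strongProd G (cycleGraph (n + 3))) (x, i) = 3 * deg G x + 2 := by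
  rw [deg_strongProd, deg_cycleGraph]
  omega

lemma strongProd_cycleGraph_adj_zero_one (G : SimpleGraph V) (x : V) :
    (strongProd G (cycleGraph (n + 3))).Adj (x, 0) (x, 1) :=
  strongProd_adj_iff.2 (.inl ⟨rfl, cycleGraph_adj_iff.2 (.inr (zero_add 1).symm)⟩)

lemma minEdgeDeg_strongProd_cycleGraph [Finite V] [Nonempty V] :
    minEdgeDeg (strongProd G (cycleGraph (n + 3))) = 6 * minDeg G + 2 := by
  obtain ⟨x, hx⟩ := exists_deg_eq_minDeg (H := G)
  have hxy := strongProd_cycleGraph_adj_zero_one (n := n) G x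
  refine le_antisymm (Nat.sInf_le ⟨_, _, hxy, ?_⟩) (le_csInf ⟨_, _, _, hxy, rfl⟩ ?_)
  · simp only [deg_strongProd_cycleGraph, hx]
    omega
  · rintro _ ⟨⟨x, i⟩, ⟨y, j⟩, -, rfl⟩
    simp only [deg_strongProd_cycleGraph]
    have := minDeg_le_deg (H := G) x
    have := minDeg_le_deg (H := G) y
    omega

lemma exists_isRestrictedEdgeCut_strongProd_cycleGraph [Finite V] [Nontrivial V]
    (hG : G.Connected) :
    ∃ S, IsRestrictedEdgeCut (strongProd G (cycleGraph (n + 3))) S ∧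
      S.ncard = 6 * minDeg G + 2 := by
  obtain ⟨x, hx⟩ := exists_deg_eq_minDeg (H := G)
  have hnb : ∀ w : V × Fin (n + 3), w ≠ (x, 0) → w ≠ (x, 1) → ∃ w', w' ≠ (x, 0) ∧
      w' ≠ (x, 1) ∧ (strongProd G (cycleGraph (n + 3))).Adj w w' := by
    rintro ⟨y, j⟩ hu hv
    by_cases hy : y = x
    · obtain ⟨y', hy'⟩ : ∃ y', G.Adj y y' := by
        simpa [IsIsolated] using hG.preconnected.not_isIsolated y
      refine ⟨(y', j), ?_, ?_, strongProd_adj_iff.2 (.inr ⟨hy', .inl rfl⟩)⟩ <;>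
        simp [← hy, hy'.ne']
    · refine ⟨(y, j + 1), ?_, ?_,
        strongProd_adj_iff.2 (.inl ⟨rfl, cycleGraph_adj_iff.2 (.inr rfl)⟩)⟩ <;> simp [hy]
  obtain ⟨S, hS, hcard⟩ := exists_isRestrictedEdgeCut_of_adj
    (strongProd_cycleGraph_adj_zero_one (n := n) G x)
    ⟨(x, 2), by simp [show (2 : Fin (n + 3)) ≠ 0 from ne_of_beq_false rfl,
      show (2 : Fin (n + 3)) ≠ 1 from ne_of_beq_false rfl]⟩ hnb
  refine ⟨S, hS, ?_⟩
  rw [hcard, deg_strongProd_cycleGraph, deg_strongProd_cycleGraph, hx]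
  omega

variable {X : Set (V × Fin (n + 3))}

lemma card_fiber_add_card_fiber_compl (z : V) : #(fiber X z) + #(fiber Xᶜ z) = n + 3 := by
  rw [fiber_compl, card_add_card_compl, Fintype.card_fin]

lemma three_mul_sub_le_fiberBoundary {z z' : V} (h : G.Adj z z') :
    3 * (#(fiber X z) - #(fiber X z')) ≤
      fiberBoundary (strongProd G (cycleGraph (n + 3))) X z z' := by
  have := le_card_closedLinks_compl deg_cycleGraph (fiber X z) (fiber X z')
  rw [fiberBoundary_strongProd_of_adj X h, fiber_compl]
  omega

lemma two_le_fiberBoundary_self {z : V} (h : (fiber X z).Nonempty)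
    (hc : (fiber Xᶜ z).Nonempty) :
    2 ≤ fiberBoundary (strongProd G (cycleGraph (n + 3))) X z z := by
  rw [fiberBoundary_strongProd_self]
  refine two_le_card_boundaryDarts_cycleGraph h fun h' => ?_
  simp [fiber_compl, h'] at hc

lemma fiberBoundary_of_fiber_compl_eq_empty {z z' : V} (h : G.Adj z z')
    (hz : fiber Xᶜ z = ∅) :
    fiberBoundary (strongProd G (cycleGraph (n + 3))) X z z' = 3 * #(fiber Xᶜ z') := by
  rw [fiber_compl, compl_eq_empty_iff] at hz
  rw [fiberBoundary_strongProd_of_adj X h, hz, card_closedLinks_univ_left deg_cycleGraph]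

lemma four_le_fiberBoundary_add {z z' : V} (h : G.Adj z z') (hz : (fiber X z).Nonempty)
    (hz' : (fiber X z').Nonempty) (hzc : (fiber Xᶜ z).Nonempty)
    (hzc' : (fiber Xᶜ z').Nonempty) :
    4 ≤ fiberBoundary (strongProd G (cycleGraph (n + 3))) X z z' +
      fiberBoundary (strongProd G (cycleGraph (n + 3))) X z' z := by
  rw [fiberBoundary_strongProd_of_adj X h, fiberBoundary_strongProd_of_adj X h.symm]
  have := card_add_card_add_two_le_card_closedLinks hz hzc'
  have := card_add_card_add_two_le_card_closedLinks hz' hzc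
  have := card_fiber_add_card_fiber_compl (X := X) z
  have := card_fiber_add_card_fiber_compl (X := X) z'
  omega

end StrongProductCycle

section LowerBound

variable {V : Type*} [Fintype V] {G : SimpleGraph V} {n : ℕ} {X : Set (V × Fin (n + 3))}

lemma three_mul_edgeConn_le_card_boundaryDarts (hfull : ∃ z, fiber Xᶜ z = ∅)
    (hempty : ∃ z, fiber X z = ∅) :
    3 * (n + 3) * edgeConn G ≤ #(boundaryDarts (strongProd G (cycleGraph (n + 3))) X) := by
  obtain ⟨a, ha⟩ := hfull
  obtain ⟨b, hb⟩ := hempty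
  set f : V → ℕ := fun z => #(fiber X z)
  have hf : ∀ z, f z ≤ n + 3 := fun z => by simpa using card_le_univ (fiber X z)
  have hfa : f a = n + 3 := by simpa [ha] using card_fiber_add_card_fiber_compl (X := X) a
  have hfb : f b = 0 := by simp [f, hb]
  calc 3 * (n + 3) * edgeConn G = 3 * ∑ t ∈ Icc 1 (n + 3), edgeConn G := by simp; ring
    _ ≤ 3 * ∑ t ∈ Icc 1 (n + 3), #(boundaryDarts G {z | t ≤ f z}) := by
        gcongr with t ht
        rw [mem_Icc] at ht
        exact edgeConn_le_card_boundaryDarts (a := a) (b := b) (by simp [hfa, ht.2])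
          (by simp [hfb]; omega)
    _ = ∑ q ∈ {q : V × V | G.Adj q.1 q.2}, 3 * (f q.1 - f q.2) := by
        rw [sum_card_boundaryDarts_superlevel f hf, mul_sum]
    _ ≤ ∑ q ∈ {q : V × V | G.Adj q.1 q.2},
          fiberBoundary (strongProd G (cycleGraph (n + 3))) X q.1 q.2 :=
        sum_le_sum fun q hq => three_mul_sub_le_fiberBoundary (mem_filter.1 hq).2
    _ ≤ ∑ q : V × V, fiberBoundary (strongProd G (cycleGraph (n + 3))) X q.1 q.2 :=
        sum_le_sum_of_subset (subset_univ _)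
    _ = _ := by rw [card_boundaryDarts_eq_sum_fiberBoundary, Fintype.sum_prod_type]

/- Each dart of `∂X` is charged to the fibre of its head, which meets `Xᶜ`. Two adjacent such
fibres share at least four darts, hence two each on average (`mul_sum_card_filter_le_sum`). -/
lemma sum_le_card_boundaryDarts_of_fiber_nonempty (hX : ∀ z, (fiber X z).Nonempty)
    {s : Finset V} (hs : ∀ z, z ∈ s ↔ (fiber Xᶜ z).Nonempty) :
    ∑ z ∈ s, (2 + 2 * #{z' ∈ s | G.Adj z z'} + 3 * #(fiber Xᶜ z) * #{z' ∈ sᶜ | G.Adj z z'}) ≤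
      #(boundaryDarts (strongProd G (cycleGraph (n + 3))) X) := by
  set F := fiberBoundary (strongProd G (cycleGraph (n + 3))) X
  have hz : ∀ z ∈ s, F z z + ∑ z' ∈ s with G.Adj z z', F z' z +
      3 * #(fiber Xᶜ z) * #{z' ∈ sᶜ | G.Adj z z'} ≤ ∑ z', F z' z := by
    intro z hz
    have hout : ∑ z' ∈ sᶜ with G.Adj z z', F z' z =
        3 * #(fiber Xᶜ z) * #{z' ∈ sᶜ | G.Adj z z'} := by
      rw [sum_congr rfl fun z' hz' => fiberBoundary_of_fiber_compl_eq_empty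
        (mem_filter.1 hz').2.symm ?_, sum_const, smul_eq_mul, mul_comm]
      simpa [hs, not_nonempty_iff_eq_empty] using (mem_filter.1 hz').1
    have hsplit : ∑ z' ∈ {z' | G.Adj z z'}, F z' z =
        ∑ z' ∈ s with G.Adj z z', F z' z + ∑ z' ∈ sᶜ with G.Adj z z', F z' z := by
      rw [← sum_union (disjoint_filter_filter disjoint_compl_right), ← filter_union,
        union_compl]
    have hnbhd : ∑ z' ∈ {z' | G.Adj z z'}, F z' z ≤ ∑ z' ∈ univ.erase z, F z' z :=
      sum_le_sum_of_subset fun z' hz' =>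
        mem_erase.2 ⟨(G.ne_of_adj (mem_filter.1 hz').2).symm, mem_univ _⟩
    rw [← add_sum_erase _ _ (mem_univ z)]
    omega
  have hdiag : ∀ z ∈ s, 2 ≤ F z z := fun z hz => two_le_fiberBoundary_self (hX z) ((hs z).1 hz)
  have hshared := mul_sum_card_filter_le_sum (s := s) (f := F) (c := 2) (fun _ _ h => h.symm)
    fun a ha b hb hab => four_le_fiberBoundary_add hab (hX a) (hX b) ((hs a).1 ha) ((hs b).1 hb)
  calc _ = ∑ z ∈ s, 2 + 2 * ∑ z ∈ s, #{z' ∈ s | G.Adj z z'} +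
        ∑ z ∈ s, 3 * #(fiber Xᶜ z) * #{z' ∈ sᶜ | G.Adj z z'} := by
        rw [sum_add_distrib, sum_add_distrib, mul_sum]
    _ ≤ ∑ z ∈ s, F z z + ∑ z ∈ s, ∑ z' ∈ s with G.Adj z z', F z' z +
        ∑ z ∈ s, 3 * #(fiber Xᶜ z) * #{z' ∈ sᶜ | G.Adj z z'} := by
        exact add_le_add_left (add_le_add (sum_le_sum hdiag) hshared) _
    _ ≤ ∑ z ∈ s, ∑ z', F z' z := by
        rw [← sum_add_distrib, ← sum_add_distrib]
        exact sum_le_sum hz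
    _ ≤ ∑ z, ∑ z', F z' z := sum_le_sum_of_subset (subset_univ _)
    _ = _ := by rw [card_boundaryDarts_eq_sum_fiberBoundary, sum_comm]

/- With `s` the fibres meeting `Xᶜ`: three or more of them contribute `2 + 2δ` each, two of them
`1 + 3δ` each, and a single one contains all of `Xᶜ`, hence at least two of its points. -/
lemma le_card_boundaryDarts_of_fiber_nonempty (hX : ∀ z, (fiber X z).Nonempty)
    (hXc : 2 ≤ Xᶜ.ncard) :
    6 * minDeg G + 2 ≤ #(boundaryDarts (strongProd G (cycleGraph (n + 3))) X) := by
  obtain ⟨s, hs⟩ : ∃ s : Finset V, ∀ z, z ∈ s ↔ (fiber Xᶜ z).Nonempty :=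
    ⟨univ.filter fun z => (fiber Xᶜ z).Nonempty, by simp⟩
  refine le_trans ?_ (sum_le_card_boundaryDarts_of_fiber_nonempty hX hs)
  have hdeg : ∀ z, minDeg G ≤ #{z' ∈ s | G.Adj z z'} + #{z' ∈ sᶜ | G.Adj z z'} := fun z => by
    rw [← card_union_of_disjoint (disjoint_filter_filter disjoint_compl_right), ← filter_union,
      union_compl, ← deg_eq_card_filter_adj]
    exact minDeg_le_deg z
  have hin : ∀ z ∈ s, #{z' ∈ s | G.Adj z z'} + 1 ≤ #s := fun z hz => by
    rw [← card_erase_add_one hz]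
    exact Nat.add_le_add_right (card_le_card fun z' hz' => mem_erase.2
      ⟨(G.ne_of_adj (mem_filter.1 hz').2).symm, (mem_filter.1 hz').1⟩) 1
  have hk : ∀ z ∈ s, 1 ≤ #(fiber Xᶜ z) := fun z hz => ((hs z).1 hz).card_pos
  obtain ⟨⟨y, j⟩, hyj⟩ := Set.nonempty_of_ncard_ne_zero (s := Xᶜ) (by omega)
  have hy : y ∈ s := (hs y).2 ⟨j, mem_fiber.2 hyj⟩
  rcases (by have := card_pos.2 ⟨y, hy⟩; omega : #s = 1 ∨ #s = 2 ∨ 3 ≤ #s) with h | h | h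
  · obtain ⟨y, rfl⟩ := card_eq_one.1 h
    have hky : 2 ≤ #(fiber Xᶜ y) :=
      hXc.trans (ncard_le_card_fiber fun z hz => mem_singleton.1 ((hs z).2 hz))
    have := hdeg y
    have := hin y (mem_singleton_self y)
    rw [sum_singleton]
    nlinarith
  · obtain ⟨y, z, hyz, rfl⟩ := card_eq_two.1 h
    have := hdeg y
    have := hdeg z
    have := hin y (by simp)
    have := hin z (by simp)
    have := hk y (by simp)
    have := hk z (by simp)
    rw [sum_pair hyz]
    nlinarith
  · calc 6 * minDeg G + 2 ≤ #s * (2 + 2 * minDeg G) := by nlinarith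
      _ ≤ _ := by
        rw [← smul_eq_mul]
        refine card_nsmul_le_sum _ _ _ fun z hz => ?_
        have := hdeg z
        have := hk z hz
        nlinarith

lemma le_card_boundaryDarts_strongProd_cycleGraph
    (h : 6 * minDeg G + 2 ≤ 3 * (n + 3) * edgeConn G) (hX : 2 ≤ X.ncard)
    (hXc : 2 ≤ Xᶜ.ncard) :
    6 * minDeg G + 2 ≤ #(boundaryDarts (strongProd G (cycleGraph (n + 3))) X) := by
  by_cases hI : (∃ z, fiber Xᶜ z = ∅) ∧ ∃ z, fiber X z = ∅
  · exact h.trans (three_mul_edgeConn_le_card_boundaryDarts hI.1 hI.2)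
  simp only [not_and_or, not_exists, ← ne_eq, ← nonempty_iff_ne_empty] at hI
  rcases hI with hI | hI
  · rw [← card_boundaryDarts_compl]
    exact le_card_boundaryDarts_of_fiber_nonempty hI (by rwa [compl_compl])
  · exact le_card_boundaryDarts_of_fiber_nonempty hI hXc

end LowerBound

theorem maximallyRestricted_strongProd_cycleGraph {V : Type*} [Fintype V]
    (G : SimpleGraph V) (m n : ℕ) (hm : Fintype.card V = m) (hnt : 2 ≤ m)
    (hG : G.Connected) (hn : 3 ≤ n)
    (h : 6 * minDeg G + 2 ≤ min (3 * n * edgeConn G) (2 * (m + 2 * numEdges G))) :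
    restEdgeConn (strongProd G (SimpleGraph.cycleGraph n)) =
      minEdgeDeg (strongProd G (SimpleGraph.cycleGraph n)) := by
  obtain ⟨k, rfl⟩ : ∃ k, n = k + 3 := ⟨n - 3, by omega⟩
  have : Nontrivial V := Fintype.one_lt_card_iff_nontrivial.1 (hm ▸ hnt)
  obtain ⟨S₀, hS₀, hcard₀⟩ := exists_isRestrictedEdgeCut_strongProd_cycleGraph (n := k) hG
  rw [minEdgeDeg_strongProd_cycleGraph]
  refine le_antisymm (hcard₀ ▸ Nat.sInf_le ⟨S₀, hS₀, rfl⟩) (le_csInf ⟨_, S₀, hS₀, rfl⟩ ?_)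
  rintro _ ⟨S, hS, rfl⟩
  obtain ⟨X, hX, hXc, hXS⟩ := hS.exists_card_boundaryDarts_le
  exact (le_card_boundaryDarts_strongProd_cycleGraph (h.trans (min_le_left _ _)) hX hXc).trans
    hXS
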